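/- For r ≥ 3, one has ‖B(u)‖_{V'+L^{(r+1)/r}} ≤ ‖u‖_{L^{r+1}}^{(r+1)/(r-1)} ‖u‖_{L²}^{(r-3)/(r-1)} for all u ∈ V ∩ L^{r+1}, where B(u) = P((u·∇)u). -/

import Mathlib

open MeasureTheory Real
noncomputable section

/-- Euclidean 3-space, used both as the periodic box parametrization and target. -/
abbrev E3 := EuclideanSpace ℝ (Fin 3)

/-- The fundamental domain `[0,L]³` of the torus `T³`. -/
def box (L : ℝ) : Set E3 := {x | ∀ i, x i ∈ Set.Icc (0 : ℝ) L}

/-- The standard basis vector `e_i`. -/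
def e3 (i : Fin 3) : E3 := EuclideanSpace.single i 1

/-- `u` is `L`-periodic in each coordinate direction. -/
def Periodic3 (L : ℝ) {α : Type*} (u : E3 → α) : Prop :=
  ∀ (x : E3) (i : Fin 3), u (x + L • e3 i) = u x

/-- `|∇u|² = Σ_{i,j} (∂u_j/∂x_i)²`. -/
def gradNormSq (u : E3 → E3) (x : E3) : ℝ :=
  ∑ i, ∑ j, (fderiv ℝ u x (e3 i) j) ^ 2

/-- `|∇f|²` for a scalar function. -/
def gradNormSqScalar (f : E3 → ℝ) (x : E3) : ℝ :=
  ∑ i, (fderiv ℝ f x (e3 i)) ^ 2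

/-- `u` is divergence free. -/
def divFree (u : E3 → E3) : Prop := ∀ x, ∑ i, fderiv ℝ u x (e3 i) i = 0

/-- The Laplacian `Δu`. -/
def lap (u : E3 → E3) (x : E3) : E3 :=
  ∑ i, fderiv ℝ (fun y => fderiv ℝ u y (e3 i)) x (e3 i)

/-- The Navier–Stokes trilinear form `b(u,v,w) = ∫ (u·∇)v·w`. -/
def triB (L : ℝ) (u v w : E3 → E3) : ℝ :=
  ∫ x in box L, ∑ i, ∑ j, u x i * fderiv ℝ v x (e3 i) j * w x j

/-- The `L^p` norm over the fundamental domain (for a real exponent `p`). -/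
def LpNorm (L p : ℝ) (u : E3 → E3) : ℝ := (∫ x in box L, ‖u x‖ ^ p) ^ (1 / p)

/-- The square of the `V`-norm, `‖u‖_V² = ∫ |∇u|²`. -/
def VnormSq (L : ℝ) (u : E3 → E3) : ℝ := ∫ x in box L, gradNormSq u x

/-- The `V`-norm `‖u‖_V = ‖∇u‖_{L²}`. -/
def Vnorm (L : ℝ) (u : E3 → E3) : ℝ := Real.sqrt (VnormSq L u)

/-!
Because `u` is divergence free and all fields are periodic, integrating `∂ᵢ((v·w) uᵢ)` over the
box gives `b(u,v,w) = -b(u,w,v)`. Hence `|b(u,u,ψ)| = |b(u,ψ,u)| ≤ ‖u‖_{L⁴}² ‖∇ψ‖_{L²}` by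
Cauchy–Schwarz, and Hölder's inequality interpolates `L⁴` between `L²` and `L^{r+1}`:
`‖u‖_{L⁴}⁴ ≤ ‖u‖_{L^{r+1}}^{2(r+1)/(r-1)} ‖u‖_{L²}^{2(r-3)/(r-1)}`.
-/

open Set

theorem integral_rpow_mul_rpow_le {α : Type*} [MeasurableSpace α] {μ : Measure α}
    {f g : α → ℝ} (hf0 : 0 ≤ᵐ[μ] f) (hg0 : 0 ≤ᵐ[μ] g) (hf : Integrable f μ)
    (hg : Integrable g μ) {p q : ℝ} (hp : 0 ≤ p) (hq : 0 ≤ q) (hpq : p + q = 1) :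
    ∫ x, f x ^ p * g x ^ q ∂μ ≤ (∫ x, f x ∂μ) ^ p * (∫ x, g x ∂μ) ^ q := by
  have hofReal : (fun x => ENNReal.ofReal (f x ^ p * g x ^ q)) =ᵐ[μ]
      fun x => ENNReal.ofReal (f x) ^ p * ENNReal.ofReal (g x) ^ q := by
    filter_upwards [hf0, hg0] with x hfx hgx
    rw [ENNReal.ofReal_mul (Real.rpow_nonneg hfx p), ENNReal.ofReal_rpow_of_nonneg hfx hp,
      ENNReal.ofReal_rpow_of_nonneg hgx hq]
  have hfin : (∫⁻ x, ENNReal.ofReal (f x) ∂μ) ^ p * (∫⁻ x, ENNReal.ofReal (g x) ∂μ) ^ q ≠ ⊤ :=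
    ENNReal.mul_ne_top (ENNReal.rpow_ne_top_of_nonneg hp hf.lintegral_lt_top.ne)
      (ENNReal.rpow_ne_top_of_nonneg hq hg.lintegral_lt_top.ne)
  rw [integral_eq_lintegral_of_nonneg_ae hf0 hf.1, integral_eq_lintegral_of_nonneg_ae hg0 hg.1,
    ENNReal.toReal_rpow, ENNReal.toReal_rpow, ← ENNReal.toReal_mul,
    integral_eq_lintegral_of_nonneg_ae, lintegral_congr_ae hofReal]
  · exact ENNReal.toReal_mono hfin (ENNReal.lintegral_mul_norm_pow_le
      hf.1.aemeasurable.ennreal_ofReal hg.1.aemeasurable.ennreal_ofReal hp hq hpq)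
  · filter_upwards [hf0, hg0] with x hfx hgx
    exact mul_nonneg (Real.rpow_nonneg hfx p) (Real.rpow_nonneg hgx q)
  · exact ((hf.1.aemeasurable.pow_const p).mul (hg.1.aemeasurable.pow_const q)).aestronglyMeasurable

theorem integral_rpow_interpolate_le {α : Type*} [MeasurableSpace α]
    {μ : Measure α} {f : α → ℝ} (hf0 : 0 ≤ᵐ[μ] f) {p₀ p₁ θ : ℝ} (hθ₀ : 0 ≤ θ) (hθ₁ : θ ≤ 1)
    (hp : (1 - θ) * p₀ + θ * p₁ ≠ 0) (hf₀ : Integrable (fun x => f x ^ p₀) μ)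
    (hf₁ : Integrable (fun x => f x ^ p₁) μ) :
    ∫ x, f x ^ ((1 - θ) * p₀ + θ * p₁) ∂μ ≤
      (∫ x, f x ^ p₀ ∂μ) ^ (1 - θ) * (∫ x, f x ^ p₁ ∂μ) ^ θ := by
  refine le_trans (le_of_eq (integral_congr_ae ?_)) (integral_rpow_mul_rpow_le
    (hf0.mono fun x hx => Real.rpow_nonneg hx _) (hf0.mono fun x hx => Real.rpow_nonneg hx _)
    hf₀ hf₁ (sub_nonneg.2 hθ₁) hθ₀ (sub_add_cancel 1 θ))
  filter_upwards [hf0] with x hx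
  rw [← Real.rpow_mul hx, ← Real.rpow_mul hx,
    ← Real.rpow_add' hx (by rwa [mul_comm p₀, mul_comm p₁])]
  ring_nf

theorem sq_sum_sum_mul_mul_le {ι κ : Type*} (s : Finset ι) (t : Finset κ) (a : ι → ℝ)
    (M : ι → κ → ℝ) (c : κ → ℝ) :
    (∑ i ∈ s, ∑ j ∈ t, a i * M i j * c j) ^ 2 ≤
      (∑ i ∈ s, a i ^ 2) * (∑ i ∈ s, ∑ j ∈ t, M i j ^ 2) * ∑ j ∈ t, c j ^ 2 := by
  calc (∑ i ∈ s, ∑ j ∈ t, a i * M i j * c j) ^ 2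
      = (∑ i ∈ s, a i * ∑ j ∈ t, M i j * c j) ^ 2 := by simp_rw [Finset.mul_sum, mul_assoc]
    _ ≤ (∑ i ∈ s, a i ^ 2) * ∑ i ∈ s, (∑ j ∈ t, M i j * c j) ^ 2 :=
        Finset.sum_mul_sq_le_sq_mul_sq _ _ _
    _ ≤ (∑ i ∈ s, a i ^ 2) * ∑ i ∈ s, (∑ j ∈ t, M i j ^ 2) * ∑ j ∈ t, c j ^ 2 := by
        gcongr with i
        exact Finset.sum_mul_sq_le_sq_mul_sq _ _ _
    _ = _ := by rw [← Finset.sum_mul, mul_assoc]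

theorem Fin.insertNth_eq_insertNth_add_single {n : ℕ} (i : Fin (n + 1)) (a b : ℝ)
    (x : Fin n → ℝ) :
    (i.insertNth b x : Fin (n + 1) → ℝ) = i.insertNth a x + Pi.single i (b - a) := by
  ext m
  refine Fin.succAboveCases i ?_ (fun k => ?_) m <;> simp

theorem integral_Icc_fderiv_single_eq_zero_of_periodic {n : ℕ} {a b : Fin (n + 1) → ℝ}
    (hab : a ≤ b) {f : (Fin (n + 1) → ℝ) → ℝ} (hf : ContDiff ℝ 1 f) (i : Fin (n + 1))
    (hper : ∀ x, f (x + Pi.single i (b i - a i)) = f x) :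
    ∫ x in Icc a b, fderiv ℝ f x (Pi.single i 1) = 0 := by
  classical
  have hdiv := integral_divergence_of_hasFDerivAt_off_countable' a b hab
    (fun j x => if j = i then f x else 0) (fun j x => if j = i then fderiv ℝ f x else 0)
    ∅ countable_empty
    (fun j => by
      rcases eq_or_ne j i with rfl | hj
      · simpa using hf.continuous.continuousOn
      · simpa [hj] using continuousOn_const)
    (fun x _ j => by
      rcases eq_or_ne j i with rfl | hj
      · simpa using (hf.differentiable one_ne_zero x).hasFDerivAt
      · simpa [hj] using hasFDerivAt_const 0 x)
    (by
      have hcont := (hf.continuous_fderiv one_ne_zero).clm_apply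
        (continuous_const (y := Pi.single i 1))
      simpa [apply_ite DFunLike.coe, ite_apply] using hcont.integrableOn_Icc (μ := volume))
  have hfaces : ∀ j y, (if j = i then f (j.insertNth (b j) y) else 0) =
      if j = i then f (j.insertNth (a j) y) else 0 := by
    rintro j y
    split_ifs with hj
    · rw [hj, Fin.insertNth_eq_insertNth_add_single i (a i) (b i), hper]
    · rfl
  simpa [apply_ite DFunLike.coe, ite_apply, hfaces] using hdiv

theorem box_eq_preimage (L : ℝ) : box L = WithLp.ofLp ⁻¹' Icc (0 : Fin 3 → ℝ) (fun _ => L) := by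
  ext x
  simp [box, Pi.le_def, forall_and]

theorem isCompact_box (L : ℝ) : IsCompact (box L) := by
  rw [box_eq_preimage]
  exact (PiLp.homeomorph 2 _).isCompact_preimage.2 isCompact_Icc

theorem measurableSet_box (L : ℝ) : MeasurableSet (box L) :=
  (isCompact_box L).isClosed.measurableSet

theorem Continuous.integrableOn_box {f : E3 → ℝ} (hf : Continuous f) (L : ℝ) :
    IntegrableOn f (box L) :=
  hf.continuousOn.integrableOn_compact (isCompact_box L)

theorem setIntegral_box (L : ℝ) (f : E3 → ℝ) :
    ∫ x in box L, f x = ∫ y in Icc 0 (fun _ => L), f (WithLp.toLp 2 y) := by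
  rw [box_eq_preimage]
  exact (PiLp.volume_preserving_ofLp (Fin 3)).setIntegral_preimage_emb
    (MeasurableEquiv.toLp 2 (Fin 3 → ℝ)).symm.measurableEmbedding (fun y => f (WithLp.toLp 2 y)) _

theorem smul_e3 (c : ℝ) (i : Fin 3) : c • e3 i = WithLp.toLp 2 (Pi.single i c) := by
  ext j
  by_cases h : j = i <;> simp [e3, h]

theorem integral_box_fderiv_eq_zero_of_periodic {L : ℝ} (hL : 0 ≤ L) {f : E3 → ℝ}
    (hf : ContDiff ℝ 1 f) (i : Fin 3) (hper : ∀ x, f (x + L • e3 i) = f x) :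
    ∫ x in box L, fderiv ℝ f x (e3 i) = 0 := by
  set κ := (EuclideanSpace.equiv (Fin 3) ℝ).symm
  have hderiv : ∀ y, fderiv ℝ (f ∘ κ) y (Pi.single i 1) = fderiv ℝ f (κ y) (e3 i) := fun y => by
    rw [κ.comp_right_fderiv]; rfl
  have hper' : ∀ y, (f ∘ κ) (y + Pi.single i (L - 0)) = (f ∘ κ) y := fun y => by
    simpa [κ, smul_e3] using hper (κ y)
  rw [setIntegral_box, ← integral_Icc_fderiv_single_eq_zero_of_periodic (fun _ => hL)
    (hf.comp κ.contDiff) i hper']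
  simp only [hderiv]
  rfl

theorem fderiv_coord {u : E3 → E3} {x : E3} (hu : DifferentiableAt ℝ u x) (j : Fin 3)
    (v : E3) : fderiv ℝ (fun y => u y j) x v = fderiv ℝ u x v j :=
  congrArg (· v) ((EuclideanSpace.proj j).hasFDerivAt.comp x hu.hasFDerivAt).fderiv

theorem continuous_fderiv_coord {u : E3 → E3} (hu : ContDiff ℝ 1 u) (v : E3) (j : Fin 3) :
    Continuous fun x => fderiv ℝ u x v j :=
  (EuclideanSpace.proj j).continuous.comp ((hu.continuous_fderiv one_ne_zero).clm_apply
    continuous_const)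

theorem fderiv_sum_coord_mul_coord {v w : E3 → E3} {x : E3} (hv : DifferentiableAt ℝ v x)
    (hw : DifferentiableAt ℝ w x) (h : E3) :
    fderiv ℝ (fun y => ∑ j, v y j * w y j) x h =
      ∑ j, (v x j * fderiv ℝ w x h j + w x j * fderiv ℝ v x h j) := by
  rw [fderiv_fun_sum (A := fun j y => v y j * w y j) fun j _ =>
    (differentiableAt_euclidean.1 hv j).mul (differentiableAt_euclidean.1 hw j)]
  simp [fderiv_fun_mul (differentiableAt_euclidean.1 hv _) (differentiableAt_euclidean.1 hw _),
    fderiv_coord hv, fderiv_coord hw]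

theorem sum_fderiv_flux {u v w : E3 → E3} {x : E3} (hu : DifferentiableAt ℝ u x)
    (hv : DifferentiableAt ℝ v x) (hw : DifferentiableAt ℝ w x) :
    ∑ i, fderiv ℝ (fun y => (∑ j, v y j * w y j) * u y i) x (e3 i) =
      (∑ j, v x j * w x j) * (∑ i, fderiv ℝ u x (e3 i) i) +
        ((∑ i, ∑ j, u x i * fderiv ℝ v x (e3 i) j * w x j) +
          ∑ i, ∑ j, u x i * fderiv ℝ w x (e3 i) j * v x j) := by
  have hvw : DifferentiableAt ℝ (fun y => ∑ j, v y j * w y j) x :=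
    DifferentiableAt.fun_sum fun j _ =>
      (differentiableAt_euclidean.1 hv j).mul (differentiableAt_euclidean.1 hw j)
  simp only [fderiv_fun_mul hvw (differentiableAt_euclidean.1 hu _),
    fderiv_sum_coord_mul_coord hv hw, add_apply, smul_apply, fderiv_coord hu, smul_eq_mul,
    Finset.sum_add_distrib, Finset.mul_sum]
  congr 1
  rw [← Finset.sum_add_distrib]
  refine Finset.sum_congr rfl fun i _ => ?_
  simp only [← Finset.sum_add_distrib, Finset.mul_sum]
  exact Finset.sum_congr rfl fun j _ => by ring

theorem continuous_triB_integrand {u v w : E3 → E3} (hu : Continuous u) (hv : ContDiff ℝ 1 v)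
    (hw : Continuous w) :
    Continuous fun x => ∑ i, ∑ j, u x i * fderiv ℝ v x (e3 i) j * w x j := by
  have := continuous_fderiv_coord hv
  fun_prop

theorem triB_add_triB_swap {L : ℝ} (hL : 0 ≤ L) {u v w : E3 → E3} (hu : ContDiff ℝ 1 u)
    (hv : ContDiff ℝ 1 v) (hw : ContDiff ℝ 1 w) (hup : Periodic3 L u) (hvp : Periodic3 L v)
    (hwp : Periodic3 L w) (hud : divFree u) :
    triB L u v w + triB L u w v = 0 := by
  set g : Fin 3 → E3 → ℝ := fun i y => (∑ j, v y j * w y j) * u y i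
  have hg : ∀ i, ContDiff ℝ 1 (g i) := fun i =>
    (ContDiff.sum fun j _ => (contDiff_euclidean.1 hv j).mul (contDiff_euclidean.1 hw j)).mul
      (contDiff_euclidean.1 hu i)
  have hgp : ∀ i x, g i (x + L • e3 i) = g i x := fun i x => by
    simp only [g, hup x i, hvp x i, hwp x i]
  have hflux : ∀ x, ∑ i, fderiv ℝ (g i) x (e3 i) =
      (∑ i, ∑ j, u x i * fderiv ℝ v x (e3 i) j * w x j) +
        ∑ i, ∑ j, u x i * fderiv ℝ w x (e3 i) j * v x j := fun x => by
    rw [sum_fderiv_flux (hu.differentiable one_ne_zero x) (hv.differentiable one_ne_zero x)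
      (hw.differentiable one_ne_zero x), hud x, mul_zero, zero_add]
  calc triB L u v w + triB L u w v = ∫ x in box L, ∑ i, fderiv ℝ (g i) x (e3 i) := by
        rw [triB, triB, ← integral_add
          ((continuous_triB_integrand hu.continuous hv hw.continuous).integrableOn_box L)
          ((continuous_triB_integrand hu.continuous hw hv.continuous).integrableOn_box L)]
        simp only [hflux]
    _ = ∑ i, ∫ x in box L, fderiv ℝ (g i) x (e3 i) :=
        integral_finsetSum _ fun i _ =>
          ((hg i).continuous_fderiv one_ne_zero |>.clm_apply continuous_const).integrableOn_box L
    _ = 0 := Finset.sum_eq_zero fun i _ =>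
        integral_box_fderiv_eq_zero_of_periodic hL (hg i) i (hgp i)

theorem gradNormSq_nonneg (v : E3 → E3) (x : E3) : 0 ≤ gradNormSq v x :=
  Finset.sum_nonneg fun _ _ => Finset.sum_nonneg fun _ _ => sq_nonneg _

theorem continuous_gradNormSq {v : E3 → E3} (hv : ContDiff ℝ 1 v) :
    Continuous (gradNormSq v) := by
  have := continuous_fderiv_coord hv
  unfold gradNormSq
  fun_prop

theorem abs_triB_integrand_le (u v w : E3 → E3) (x : E3) :
    |∑ i, ∑ j, u x i * fderiv ℝ v x (e3 i) j * w x j| ≤ ‖u x‖ * √(gradNormSq v x) * ‖w x‖ := by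
  rw [← Real.sqrt_sq (norm_nonneg (u x)), ← Real.sqrt_sq (norm_nonneg (w x)),
    ← Real.sqrt_mul (sq_nonneg _),
    ← Real.sqrt_mul (mul_nonneg (sq_nonneg _) (gradNormSq_nonneg v x)),
    EuclideanSpace.real_norm_sq_eq, EuclideanSpace.real_norm_sq_eq]
  exact Real.abs_le_sqrt (sq_sum_sum_mul_mul_le _ _ _ _ _)

theorem abs_triB_self_le (L : ℝ) {u v : E3 → E3} (hu : Continuous u) (hv : ContDiff ℝ 1 v) :
    |triB L u v u| ≤ LpNorm L 4 u ^ 2 * Vnorm L v := by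
  have hu4 : Continuous fun x => ‖u x‖ ^ (4 : ℝ) := by fun_prop (disch := norm_num)
  calc |triB L u v u|
      ≤ ∫ x in box L, (‖u x‖ ^ (4 : ℝ)) ^ (1 / 2 : ℝ) * gradNormSq v x ^ (1 / 2 : ℝ) := by
        refine (abs_integral_le_integral_abs).trans (integral_mono_of_nonneg
          (.of_forall fun x => abs_nonneg _) ?_ (.of_forall fun x => ?_))
        · have := continuous_gradNormSq hv
          exact Continuous.integrableOn_box (by fun_prop (disch := norm_num)) L
        · calc _ ≤ ‖u x‖ * √(gradNormSq v x) * ‖u x‖ := abs_triB_integrand_le u v u x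
            _ = _ := by
              dsimp only
              rw [← Real.rpow_mul (norm_nonneg _), ← Real.sqrt_eq_rpow,
                show (4 : ℝ) * (1 / 2) = 2 by norm_num, Real.rpow_two]
              ring
    _ ≤ (∫ x in box L, ‖u x‖ ^ (4 : ℝ)) ^ (1 / 2 : ℝ) *
          (∫ x in box L, gradNormSq v x) ^ (1 / 2 : ℝ) :=
        integral_rpow_mul_rpow_le (.of_forall fun x => by positivity)
          (.of_forall (gradNormSq_nonneg v)) (hu4.integrableOn_box L)
          ((continuous_gradNormSq hv).integrableOn_box L) (by norm_num) (by norm_num) (by norm_num)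
    _ = LpNorm L 4 u ^ 2 * Vnorm L v := by
        rw [LpNorm, Vnorm, VnormSq, Real.sqrt_eq_rpow, ← Real.rpow_natCast, ← Real.rpow_mul]
        · norm_num
        · exact setIntegral_nonneg (measurableSet_box L) fun x _ => by positivity

theorem lpNorm_four_sq_le {L r : ℝ} (hr : 3 ≤ r) {u : E3 → E3} (hu : Continuous u) :
    LpNorm L 4 u ^ 2 ≤
      LpNorm L (r + 1) u ^ ((r + 1) / (r - 1)) * LpNorm L 2 u ^ ((r - 3) / (r - 1)) := by
  set θ := 2 / (r - 1)
  have hr1 : 0 < r - 1 := by linarith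
  have hθ₀ : 0 ≤ θ := by positivity
  have hθ₁ : θ ≤ 1 := (div_le_one hr1).2 (by linarith)
  have hexp : (1 - θ) * 2 + θ * (r + 1) = 4 := by simp only [θ]; field_simp; ring
  have hint : ∀ p : ℝ, 0 ≤ p → 0 ≤ ∫ x in box L, ‖u x‖ ^ p := fun p _ =>
    setIntegral_nonneg (measurableSet_box L) fun x _ => by positivity
  have h := integral_rpow_interpolate_le (μ := volume.restrict (box L))
    (.of_forall fun x => norm_nonneg (u x)) hθ₀ hθ₁ (by rw [hexp]; norm_num)
    ((hu.norm.rpow_const fun _ => Or.inr zero_le_two).integrableOn_box L)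
    ((hu.norm.rpow_const fun _ => Or.inr (by linarith)).integrableOn_box L)
  rw [hexp] at h
  calc LpNorm L 4 u ^ 2 = (∫ x in box L, ‖u x‖ ^ (4 : ℝ)) ^ (1 / 2 : ℝ) := by
        rw [LpNorm, ← Real.rpow_natCast, ← Real.rpow_mul (hint 4 (by norm_num))]
        norm_num
    _ ≤ ((∫ x in box L, ‖u x‖ ^ (2 : ℝ)) ^ (1 - θ) *
          (∫ x in box L, ‖u x‖ ^ (r + 1)) ^ θ) ^ (1 / 2 : ℝ) := by gcongr
    _ = _ := by
        rw [Real.mul_rpow (by positivity [hint 2]) (by positivity [hint (r + 1)]), LpNorm, LpNorm]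
        simp only [← Real.rpow_mul (hint 2 zero_le_two),
          ← Real.rpow_mul (hint (r + 1) (by linarith))]
        rw [mul_comm]
        congr 2
        · simp only [θ]
          field_simp
        · simp only [θ]
          field_simp
          ring

/-- The dual norm `‖B(u)‖_{V'+L^{(r+1)/r}}` is expressed as the supremum of
`|⟨B(u),ψ⟩| = |b(u,u,ψ)|` over test fields `ψ ∈ V ∩ L^{r+1}` with `‖ψ‖_V + ‖ψ‖_{L^{r+1}} ≤ 1`. -/
theorem stmt17 (L r : ℝ) (hL : 0 < L) (hr : 3 ≤ r)
    (u : E3 → E3)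
    (hu : ContDiff ℝ (⊤ : ℕ∞) u) (hup : Periodic3 L u) (hud : divFree u) :
    ∀ ψ : E3 → E3, ContDiff ℝ (⊤ : ℕ∞) ψ → Periodic3 L ψ → divFree ψ →
      Vnorm L ψ + LpNorm L (r + 1) ψ ≤ 1 →
      |triB L u u ψ|
        ≤ LpNorm L (r + 1) u ^ ((r + 1) / (r - 1))
          * LpNorm L 2 u ^ ((r - 3) / (r - 1)) := by
  intro ψ hψ hψp _ hψle
  have hu₁ : ContDiff ℝ 1 u := hu.of_le (by exact_mod_cast le_top)
  have hψ₁ : ContDiff ℝ 1 ψ := hψ.of_le (by exact_mod_cast le_top)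
  have hVψ : Vnorm L ψ ≤ 1 := by
    have : 0 ≤ LpNorm L (r + 1) ψ := Real.rpow_nonneg
      (setIntegral_nonneg (measurableSet_box L) fun x _ => by positivity) _
    linarith
  calc |triB L u u ψ| = |triB L u ψ u| := by
        rw [eq_neg_of_add_eq_zero_left (triB_add_triB_swap hL.le hu₁ hu₁ hψ₁ hup hup hψp hud),
          abs_neg]
    _ ≤ LpNorm L 4 u ^ 2 * Vnorm L ψ := abs_triB_self_le L hu.continuous hψ₁
    _ ≤ LpNorm L 4 u ^ 2 := mul_le_of_le_one_right (sq_nonneg _) hVψ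
    _ ≤ _ := lpNorm_four_sq_le hr hu.continuous
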